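/- Assume Properties 3 and 4. For every finite sequence of detailed reactions in R transforming a finite multiset A consisting of resting complexes into a finite multiset B consisting of resting complexes (each step removes the reactant multiset of one reaction of R from the current multiset of complexes and adds its product multiset), there exists a finite multiset B̂ of resting sets with B ~ B̂ and a finite sequence of condensed reactions transforming Â = the multiset {SCC(a) : a ∈ A} into B̂ (each step removes the reactant multiset of one condensed reaction from the current multiset of resting sets and adds its product multiset). -/

import Mathlib

/-- A reaction: a pair (reactants, products) of finite multisets of complexes. -/
abbrev Rxn (C : Type*) := Multiset C × Multiset C

variable {C : Type*}

/-- Edge of the fast-reaction digraph Γ: a fast (1,1) reaction ({x}, {y}) in R. -/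
def FastEdge (R : Set (Rxn C)) (x y : C) : Prop :=
  ((({x} : Multiset C), ({y} : Multiset C)) : Rxn C) ∈ R

/-- Reachability along Γ. -/
def Reach (R : Set (Rxn C)) : C → C → Prop :=
  Relation.ReflTransGen (FastEdge R)

/-- The strongly connected component of Γ containing x. -/
def scc (R : Set (Rxn C)) (x : C) : Set C :=
  {y | Reach R x y ∧ Reach R y x}

/-- Q is a resting set: an SCC of Γ all of whose outgoing fast reactions stay in Q. -/
def IsRestingSet (R : Set (Rxn C)) (Q : Set C) : Prop :=
  (∃ x, Q = scc R x) ∧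
    ∀ r ∈ R, r.1.card = 1 → (∀ a ∈ r.1, a ∈ Q) → ∀ b ∈ r.2, b ∈ Q

/-- x is a resting complex: a member of some resting set. -/
def RestingComplex (R : Set (Rxn C)) (x : C) : Prop :=
  ∃ Q, IsRestingSet R Q ∧ x ∈ Q

/-- One step of a fast transition: replace one occurrence of x by the products of a
fast reaction ({x}, P) ∈ R. -/
def FastStep (R : Set (Rxn C)) (M N : Multiset C) : Prop :=
  ∃ (x : C) (P M' : Multiset C),
    ((({x} : Multiset C), P) : Rxn C) ∈ R ∧ M = x ::ₘ M' ∧ N = P + M'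

/-- A fast transition: finitely many fast steps. -/
def FastTransition (R : Set (Rxn C)) : Multiset C → Multiset C → Prop :=
  Relation.ReflTransGen (FastStep R)

/-- The fate predicate Fate(x, F), for x a complex and F a finite multiset of resting sets. -/
inductive Fate (R : Set (Rxn C)) : C → Multiset (Set C) → Prop
  | resting (x : C) (h : IsRestingSet R (scc R x)) :
      Fate R x {scc R x}
  | step (x a : C) (l : List (C × Multiset (Set C)))
      (hnr : ¬ IsRestingSet R (scc R x))
      (ha : a ∈ scc R x)
      (hr : ((({a} : Multiset C), (↑(l.map Prod.fst) : Multiset C)) : Rxn C) ∈ R)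
      (hout : ∃ b ∈ l.map Prod.fst, b ∉ scc R x)
      (hf : ∀ p ∈ l, Fate R p.1 p.2) :
      Fate R x (l.map Prod.snd).sum

/-- B ~ F : the multiset B of complexes represents the multiset F of resting sets,
i.e. there is a bijective matching pairing each b ∈ B with a Q ∈ F with b ∈ Q. -/
def Represents (B : Multiset C) (F : Multiset (Set C)) : Prop :=
  Multiset.Rel (fun b Q => b ∈ Q) B F

/-- F is a fate of the multiset P of complexes: F = F_1 + ... + F_n where
P = {b_1, ..., b_n} and Fate(b_i, F_i) for each i. -/
def FateM (R : Set (Rxn C)) (P : Multiset C) (F : Multiset (Set C)) : Prop :=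
  ∃ l : List (C × Multiset (Set C)),
    P = (↑(l.map Prod.fst) : Multiset C) ∧
    F = (l.map Prod.snd).sum ∧
    ∀ p ∈ l, Fate R p.1 p.2

/-- The condensed reactions: for each slow reaction ({a₁, a₂}, P) ∈ R and each fate F
of P, the condensed reaction ({SCC(a₁), SCC(a₂)}, F). -/
def IsCondensed (R : Set (Rxn C)) (Ahat Bhat : Multiset (Set C)) : Prop :=
  ∃ (a1 a2 : C) (P : Multiset C),
    ((({a1, a2} : Multiset C), P) : Rxn C) ∈ R ∧
    Ahat = ({scc R a1, scc R a2} : Multiset (Set C)) ∧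
    FateM R P Bhat

/-- Every reaction in R is fast (unimolecular) or slow (bimolecular). -/
def FastOrSlow (R : Set (Rxn C)) : Prop :=
  ∀ r ∈ R, r.1.card = 1 ∨ r.1.card = 2

/-- Reactants and products of every reaction are nonempty. -/
def NonemptyRxns (R : Set (Rxn C)) : Prop :=
  ∀ r ∈ R, r.1 ≠ 0 ∧ r.2 ≠ 0

/-- Property 3: every finite cyclic sequence of fast reactions, in which each reaction
consumes a product of the previous one (cyclically), consists of (1,1) reactions only. -/
def Prop3 (R : Set (Rxn C)) : Prop :=
  ∀ (n : ℕ) (hn : 0 < n) (r : Fin n → Rxn C),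
    (∀ i, r i ∈ R ∧ (r i).1.card = 1) →
    (∀ i : Fin n, ∀ a ∈ (r ⟨(i.1 + 1) % n, Nat.mod_lt _ hn⟩).1, a ∈ (r i).2) →
    ∀ i, (r i).2.card = 1

/-- Property 4: both reactants of every slow reaction are resting complexes. -/
def Prop4 (R : Set (Rxn C)) : Prop :=
  ∀ r ∈ R, r.1.card = 2 → ∀ a ∈ r.1, RestingComplex R a

/-- A resting-state transition from {a₁, a₂} to B: a slow reaction ({a₁, a₂}, P) ∈ R
followed by a fast transition from P to B. -/
def RestingTransition (R : Set (Rxn C)) (a1 a2 : C) (B : Multiset C) : Prop :=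
  ∃ P : Multiset C, ((({a1, a2} : Multiset C), P) : Rxn C) ∈ R ∧ FastTransition R P B

/-- One step of a sequence of detailed reactions: remove the reactants of some
reaction in R from the current multiset and add its products. -/
def DetailedStep (R : Set (Rxn C)) (M N : Multiset C) : Prop :=
  ∃ r ∈ R, ∃ M' : Multiset C, M = r.1 + M' ∧ N = r.2 + M'

/-- One step of a sequence of condensed reactions: remove the reactant multiset of a
condensed reaction from the current multiset of resting sets and add its products. -/
def CondensedStep (R : Set (Rxn C)) (M N : Multiset (Set C)) : Prop :=
  ∃ Ahat Bhat M' : Multiset (Set C),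
    IsCondensed R Ahat Bhat ∧ M = Ahat + M' ∧ N = Bhat + M'

/-!
Read a detailed sequence backwards and pull fates back along each reaction. Along a fast
reaction `({x}, P)` a fate of `P` is a fate of `x`: either some product leaves `SCC(x)`, which is
the second clause of `Fate`, or all products stay in `SCC(x)` and Property 3 makes the reaction a
`(1,1)` reaction inside `SCC(x)`. Along a slow reaction `({a₁, a₂}, P)` a fate `F` of `P` is
the product side of the condensed reaction `({SCC(a₁), SCC(a₂)}, F)`, and by Property 4 the
multiset `{SCC(a₁), SCC(a₂)}` is the only fate of `{a₁, a₂}`. Since a multiset `M` of resting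
complexes has the single fate `M.map scc`, pulling back the fate `B.map scc` of `B` to `A` yields a
condensed sequence from `Â` to `B.map scc`.
-/
theorem Relation.ReflTransGen.exists_seq {α : Type*} {r : α → α → Prop} {a b : α}
    (h : Relation.ReflTransGen r a b) :
    ∃ (n : ℕ) (f : ℕ → α), f 0 = a ∧ f n = b ∧ ∀ i < n, r (f i) (f (i + 1)) := by
  induction h with
  | refl => exact ⟨0, fun _ => a, rfl, rfl, by simp⟩
  | @tail c d _ hcd ih =>
    obtain ⟨n, f, h0, hn, hf⟩ := ih
    refine ⟨n + 1, fun i => if i ≤ n then f i else d, by simp [h0], by simp, fun i hi => ?_⟩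
    rcases Nat.lt_or_ge i n with hin | hin
    · simpa [hin.le, Nat.succ_le_of_lt hin] using hf i hin
    · obtain rfl : i = n := by omega
      simpa [hn] using hcd

section

variable {R : Set (Rxn C)}

theorem mem_scc_self (R : Set (Rxn C)) (x : C) : x ∈ scc R x :=
  ⟨.refl, .refl⟩

theorem scc_eq_of_mem {x y : C} (h : y ∈ scc R x) : scc R y = scc R x := by
  obtain ⟨hxy, hyx⟩ := h
  ext z
  exact ⟨fun ⟨h1, h2⟩ => ⟨hxy.trans h1, h2.trans hyx⟩,
    fun ⟨h1, h2⟩ => ⟨hyx.trans h1, h2.trans hxy⟩⟩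

theorem RestingComplex.isRestingSet_scc {a : C} (h : RestingComplex R a) :
    IsRestingSet R (scc R a) := by
  obtain ⟨Q, hQ, haQ⟩ := h
  obtain ⟨x, rfl⟩ := hQ.1
  rwa [scc_eq_of_mem haQ]

theorem represents_map_scc (B : Multiset C) : Represents B (B.map (scc R)) :=
  Multiset.rel_map_right.2 (Multiset.rel_refl_of_refl_on fun b _ => mem_scc_self R b)

/-- Property 3 applied to the cycle `p → ⋯ → x` in `Γ` closed by the reaction `({x}, P)`. -/
theorem card_eq_one_of_mem_of_reach (h3 : Prop3 R) {x p : C} {P : Multiset C}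
    (hxP : (({x}, P) : Rxn C) ∈ R) (hp : p ∈ P) (hpx : Reach R p x) : P.card = 1 := by
  obtain ⟨n, f, hf0, hfn, hf⟩ := hpx.exists_seq
  let r : Fin (n + 1) → Rxn C := fun i => ({f i}, if i.1 < n then {f (i.1 + 1)} else P)
  have hmem : ∀ i, r i ∈ R ∧ (r i).1.card = 1 := by
    intro i
    refine ⟨?_, Multiset.card_singleton _⟩
    rcases Nat.lt_or_ge i.1 n with hin | hin
    · simpa [r, hin, FastEdge] using hf i hin
    · have hi : i.1 = n := by omega
      simpa [r, hi, hfn] using hxP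
  have hlink : ∀ i : Fin (n + 1), ∀ a ∈ (r ⟨(i.1 + 1) % (n + 1), Nat.mod_lt _ n.succ_pos⟩).1,
      a ∈ (r i).2 := by
    intro i a ha
    rcases Nat.lt_or_ge i.1 n with hin | hin
    · simpa [r, hin, Nat.mod_eq_of_lt (Nat.succ_lt_succ hin)] using ha
    · have hi : i.1 = n := by omega
      simp only [r, hi, Nat.mod_self, Nat.lt_irrefl, if_false, hf0, Multiset.mem_singleton] at ha ⊢
      exact ha ▸ hp
  simpa [r] using h3 (n + 1) n.succ_pos r hmem hlink (Fin.last n)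

theorem fateM_iff_exists_rel {P : Multiset C} {F : Multiset (Set C)} :
    FateM R P F ↔ ∃ G, Multiset.Rel (Fate R) P G ∧ F = G.sum := by
  constructor
  · rintro ⟨l, rfl, rfl, hl⟩
    refine ⟨↑(l.map Prod.snd), ?_, by simp⟩
    induction l with
    | nil => exact .zero
    | cons p l ih =>
      simpa using Multiset.Rel.cons (hl p (by simp)) (ih fun q hq => hl q (by simp [hq]))
  · rintro ⟨G, hG, rfl⟩
    induction hG with
    | zero => exact ⟨[], rfl, rfl, by simp⟩
    | @cons x Fx P G hx _ ih =>
      obtain ⟨l, hP, hG, hl⟩ := ih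
      refine ⟨(x, Fx) :: l, by simp [hP], by simp [hG], ?_⟩
      simpa [hx] using hl

theorem fateM_add_iff {P Q : Multiset C} {F : Multiset (Set C)} :
    FateM R (P + Q) F ↔ ∃ F₁ F₂, FateM R P F₁ ∧ FateM R Q F₂ ∧ F = F₁ + F₂ := by
  simp only [fateM_iff_exists_rel, Multiset.rel_add_left]
  constructor
  · rintro ⟨_, ⟨G₁, G₂, h₁, h₂, rfl⟩, rfl⟩
    exact ⟨_, _, ⟨G₁, h₁, rfl⟩, ⟨G₂, h₂, rfl⟩, Multiset.sum_add _ _⟩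
  · rintro ⟨_, _, ⟨G₁, h₁, rfl⟩, ⟨G₂, h₂, rfl⟩, rfl⟩
    exact ⟨_, ⟨G₁, G₂, h₁, h₂, rfl⟩, (Multiset.sum_add _ _).symm⟩

theorem fateM_singleton_iff {x : C} {F : Multiset (Set C)} :
    FateM R {x} F ↔ Fate R x F := by
  simp [fateM_iff_exists_rel, ← Multiset.cons_zero, Multiset.rel_cons_left,
    Multiset.rel_zero_left]

theorem Fate.of_scc_eq {x y : C} (h : scc R x = scc R y) {F : Multiset (Set C)}
    (hF : Fate R y F) : Fate R x F := by
  cases hF with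
  | resting _ hy => rw [← h] at hy ⊢; exact .resting x hy
  | step _ a l hnr ha hr hout hf =>
    rw [← h] at hnr ha hout
    exact .step x a l hnr ha hr hout hf

theorem fate_iff_of_isRestingSet {x : C} (hx : IsRestingSet R (scc R x))
    {F : Multiset (Set C)} : Fate R x F ↔ F = {scc R x} := by
  constructor
  · rintro (_ | ⟨_, _, _, hnr⟩)
    · rfl
    · exact absurd hx hnr
  · rintro rfl
    exact .resting x hx

theorem fateM_iff_eq_map_scc {M : Multiset C} (hM : ∀ a ∈ M, RestingComplex R a)
    {F : Multiset (Set C)} : FateM R M F ↔ F = M.map (scc R) := by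
  have hrel : ∀ G, Multiset.Rel (Fate R) M G ↔ M.map (fun a => {scc R a}) = G := by
    intro G
    rw [← Multiset.rel_eq, Multiset.rel_map_left]
    have hfate : ∀ a ∈ M, ∀ G, Fate R a G ↔ {scc R a} = G := fun a ha G =>
      (fate_iff_of_isRestingSet (hM a ha).isRestingSet_scc).trans eq_comm
    exact ⟨fun h => h.mono fun a ha G _ => (hfate a ha G).1,
      fun h => h.mono fun a ha G _ => (hfate a ha G).2⟩
  have hsum : (M.map fun a => ({scc R a} : Multiset (Set C))).sum = M.map (scc R) := by
    simpa [Function.comp_def] using Multiset.sum_map_singleton (M.map (scc R))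
  simp only [fateM_iff_exists_rel, hrel, exists_eq_left', hsum]

theorem IsRestingSet.mem_of_fast {Q : Set C} (hQ : IsRestingSet R Q) {x : C} {P : Multiset C}
    (hxP : (({x}, P) : Rxn C) ∈ R) (hx : x ∈ Q) {b : C} (hb : b ∈ P) : b ∈ Q :=
  hQ.2 _ hxP (Multiset.card_singleton x) (by simpa using hx) b hb

theorem Fate.of_fast (h3 : Prop3 R) (hne : NonemptyRxns R) {x : C} {P : Multiset C}
    (hxP : (({x}, P) : Rxn C) ∈ R) {F : Multiset (Set C)} (hF : FateM R P F) : Fate R x F := by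
  by_cases hout : ∃ b ∈ P, b ∉ scc R x
  · have hnr : ¬ IsRestingSet R (scc R x) := fun hx =>
      let ⟨b, hb, hbx⟩ := hout
      hbx (hx.mem_of_fast hxP (mem_scc_self R x) hb)
    obtain ⟨l, rfl, rfl, hl⟩ := hF
    exact .step x x l hnr (mem_scc_self R x) hxP (by simpa using hout) hl
  · push Not at hout
    obtain ⟨p, hp⟩ := Multiset.exists_mem_of_ne_zero (hne _ hxP).2
    obtain ⟨y, rfl⟩ :=
      Multiset.card_eq_one.1 (card_eq_one_of_mem_of_reach h3 hxP hp (hout p hp).2)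
    have hy : y ∈ scc R x := hout y (Multiset.mem_singleton_self y)
    exact (fateM_singleton_iff.1 hF).of_scc_eq (scc_eq_of_mem hy).symm

theorem exists_fateM_of_detailedStep (hne : NonemptyRxns R) (hfs : FastOrSlow R)
    (h3 : Prop3 R) (h4 : Prop4 R) {M N : Multiset C} (hMN : DetailedStep R M N)
    {F : Multiset (Set C)} (hF : FateM R N F) :
    ∃ G, FateM R M G ∧ Relation.ReflTransGen (CondensedStep R) G F := by
  obtain ⟨⟨A, P⟩, hr, M', rfl, rfl⟩ := hMN
  obtain ⟨F₁, F₂, hPF₁, hF₂, rfl⟩ := fateM_add_iff.1 hF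
  rcases hfs _ hr with hA | hA
  · obtain ⟨x, rfl⟩ := Multiset.card_eq_one.1 hA
    have hxF : FateM R {x} F₁ := fateM_singleton_iff.2 (.of_fast h3 hne hr hPF₁)
    exact ⟨F₁ + F₂, fateM_add_iff.2 ⟨F₁, F₂, hxF, hF₂, rfl⟩, .refl⟩
  · obtain ⟨a₁, a₂, rfl⟩ := Multiset.card_eq_two.1 hA
    have hAF : FateM R {a₁, a₂} {scc R a₁, scc R a₂} :=
      (fateM_iff_eq_map_scc (h4 _ hr hA)).2 (by simp)
    exact ⟨_, fateM_add_iff.2 ⟨_, F₂, hAF, hF₂, rfl⟩,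
      .single ⟨_, F₁, F₂, ⟨a₁, a₂, P, hr, rfl, hPF₁⟩, rfl, rfl⟩⟩

theorem exists_fateM_of_reflTransGen_detailedStep (hne : NonemptyRxns R) (hfs : FastOrSlow R)
    (h3 : Prop3 R) (h4 : Prop4 R) {M N : Multiset C}
    (hMN : Relation.ReflTransGen (DetailedStep R) M N) {F : Multiset (Set C)}
    (hF : FateM R N F) : ∃ G, FateM R M G ∧ Relation.ReflTransGen (CondensedStep R) G F := by
  induction hMN generalizing F with
  | refl => exact ⟨F, hF, .refl⟩
  | tail _ hstep ih =>
    obtain ⟨G', hG', hG'F⟩ := exists_fateM_of_detailedStep hne hfs h3 h4 hstep hF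
    obtain ⟨G, hG, hGG'⟩ := ih hG'
    exact ⟨G, hG, hGG'.trans hG'F⟩

end

theorem detailed_seq_to_condensed_seq_general {C : Type*} (R : Set (Rxn C))
    (hne : NonemptyRxns R) (hfs : FastOrSlow R)
    (h3 : Prop3 R) (h4 : Prop4 R)
    (A B : Multiset C)
    (hA : ∀ a ∈ A, RestingComplex R a) (hB : ∀ b ∈ B, RestingComplex R b)
    (hseq : Relation.ReflTransGen (DetailedStep R) A B) :
    ∃ Bhat : Multiset (Set C),
      Represents B Bhat ∧
      Relation.ReflTransGen (CondensedStep R) (A.map (scc R)) Bhat := by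
  obtain ⟨G, hAG, hGB⟩ := exists_fateM_of_reflTransGen_detailedStep hne hfs h3 h4 hseq
    ((fateM_iff_eq_map_scc hB).2 rfl)
  rw [(fateM_iff_eq_map_scc hA).1 hAG] at hGB
  exact ⟨_, represents_map_scc B, hGB⟩

/-- Corollary 2: any sequence of detailed reactions from a multiset A of resting
complexes to a multiset B of resting complexes is represented by a sequence of
condensed reactions from Â = {SCC(a) : a ∈ A} to some B̂ with B ~ B̂. -/
theorem detailed_seq_to_condensed_seq {C : Type*} [Fintype C] (R : Set (Rxn C))
    (hRfin : R.Finite) (hne : NonemptyRxns R) (hfs : FastOrSlow R)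
    (h3 : Prop3 R) (h4 : Prop4 R)
    (A B : Multiset C)
    (hA : ∀ a ∈ A, RestingComplex R a) (hB : ∀ b ∈ B, RestingComplex R b)
    (hseq : Relation.ReflTransGen (DetailedStep R) A B) :
    ∃ Bhat : Multiset (Set C),
      Represents B Bhat ∧
      Relation.ReflTransGen (CondensedStep R) (A.map (scc R)) Bhat :=
  detailed_seq_to_condensed_seq_general R hne hfs h3 h4 A B hA hB hseq
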